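/- Consider the two-item all-pay auction with parameters (B_1, B_2, v_{11}, v_{12}, v_{21}, v_{22}). If B_1 = B_2 and v_{11} = v_{12} = v_{21} = v_{22} = v, let c = min{v, B_1}. Then the strategy profile in which each player i ∈ {1,2} plays the mixed strategy given by the distribution of the random bid vector (U, c − U), where U is uniformly distributed on [0, c] (i.e., the uniform distribution on the segment {(t, c − t) : t ∈ [0, c]}), is a Nash equilibrium. -/

import Mathlib

/-!
Against the uniform distribution on the anti-diagonal `{(t, c - t) : t ∈ [0, c]}` the
opponent's bid on each item is uniform on `[0, c]`, so ties are null events and a bid `x` on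
an item wins with probability `min (x / c) 1`. An item bid `x ≤ c` thus earns
`x * (v / c - 1)`, while bidding more than `c` cannot pay. Since `v / c - 1 ≥ 0` vanishes
unless `c` is the budget, every feasible bid vector earns at most `c * (v / c - 1) = v - c`,
with equality on the anti-diagonal itself. When `c = 0` both players must bid `0`, and the symmetric
tie-break gives each of them `v / 2` per item.
-/

open MeasureTheory Set

noncomputable section

/-- `L_j = min {B₁, B₂, v_{1j}, v_{2j}}` for item `j` of the two-item auction. -/
def Lval2 (B : Fin 2 → ℝ) (v : Fin 2 → Fin 2 → ℝ) (j : Fin 2) : ℝ :=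
  min (min (B 0) (B 1)) (min (v 0 j) (v 1 j))

/-- Probability that player `i` wins item `j` when bidding `xi` on it while the
opponent bids `xo`: the strictly higher bid wins; on a tie at `L_j` the player with
the strictly larger `min {Bᵢ, v_{ij}}` wins, and all other ties are fair coins. -/
def winProb2 (B : Fin 2 → ℝ) (v : Fin 2 → Fin 2 → ℝ) (i j : Fin 2) (xi xo : ℝ) : ℝ :=
  if xo < xi then 1
  else if xi < xo then 0
  else if xi = Lval2 B v j ∧ min (B (1 - i)) (v (1 - i) j) < min (B i) (v i j) then 1
  else if xi = Lval2 B v j ∧ min (B i) (v i j) < min (B (1 - i)) (v (1 - i) j) then 0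
  else 1 / 2

/-- Expected total utility of player `i` from the pure bid vectors `p` (own) and
`q` (opponent): the sum over the two items of the item payoffs. -/
def payoff2 (B : Fin 2 → ℝ) (v : Fin 2 → Fin 2 → ℝ) (i : Fin 2) (p q : ℝ × ℝ) : ℝ :=
  (winProb2 B v i 0 p.1 q.1 * v i 0 - p.1) +
    (winProb2 B v i 1 p.2 q.2 * v i 1 - p.2)

/-- Feasible bid vectors of a player with budget `Bi`. -/
def Feas (Bi : ℝ) : Set (ℝ × ℝ) := {p | 0 ≤ p.1 ∧ 0 ≤ p.2 ∧ p.1 + p.2 ≤ Bi}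

/-- A mixed strategy with budget `Bi`: a probability measure on the feasible set. -/
def IsStrategy2 (Bi : ℝ) (μ : Measure (ℝ × ℝ)) : Prop :=
  IsProbabilityMeasure μ ∧ μ (Feas Bi) = 1

/-- Expected utility of player `i` when he plays `μ` and the opponent plays `ν`. -/
def expUtil2 (B : Fin 2 → ℝ) (v : Fin 2 → Fin 2 → ℝ) (i : Fin 2)
    (μ ν : Measure (ℝ × ℝ)) : ℝ :=
  ∫ p, (∫ q, payoff2 B v i p q ∂ν) ∂μ

/-- `(F 0, F 1)` is a (mixed) Nash equilibrium of the two-item all-pay auction. -/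
def IsNash2 (B : Fin 2 → ℝ) (v : Fin 2 → Fin 2 → ℝ) (F : Fin 2 → Measure (ℝ × ℝ)) :
    Prop :=
  (∀ i, IsStrategy2 (B i) (F i)) ∧
  ∀ i, ∀ μ, IsStrategy2 (B i) μ →
    expUtil2 B v i μ (F (1 - i)) ≤ expUtil2 B v i (F i) (F (1 - i))

/-- The uniform distribution on the segment from `a` to `b` in the plane: the
pushforward of the uniform distribution on `[0, 1]` under the affine
parameterization of the segment. -/
def unifSeg (a b : ℝ × ℝ) : Measure (ℝ × ℝ) :=
  Measure.map (fun t : ℝ => ((1 - t) * a.1 + t * b.1, (1 - t) * a.2 + t * b.2))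
    (volume.restrict (Icc (0 : ℝ) 1))

section WinProb

variable (B : Fin 2 → ℝ) (v : Fin 2 → Fin 2 → ℝ) (i j : Fin 2)

theorem measurable_winProb2 (x : ℝ) : Measurable (winProb2 B v i j x) := by
  unfold winProb2
  refine Measurable.ite (measurableSet_lt measurable_id measurable_const) measurable_const ?_
  refine Measurable.ite (measurableSet_lt measurable_const measurable_id) measurable_const ?_
  split_ifs <;> exact measurable_const

theorem abs_winProb2_le_one (x y : ℝ) : |winProb2 B v i j x y| ≤ 1 := by
  unfold winProb2; split_ifs <;> norm_num

variable {B v i j}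

theorem winProb2_of_lt {x y : ℝ} (h : y < x) : winProb2 B v i j x y = 1 :=
  if_pos h

theorem winProb2_of_gt {x y : ℝ} (h : x < y) : winProb2 B v i j x y = 0 := by
  rw [winProb2, if_neg h.not_gt, if_pos h]

theorem winProb2_self (h : min (B (1 - i)) (v (1 - i) j) = min (B i) (v i j)) (x : ℝ) :
    winProb2 B v i j x x = 1 / 2 := by
  simp [winProb2, h]

theorem integrable_winProb2_comp {α : Type*} [MeasurableSpace α] {μ : Measure α}
    [IsFiniteMeasure μ] {g : α → ℝ} (hg : Measurable g) (x : ℝ) :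
    Integrable (fun a => winProb2 B v i j x (g a)) μ :=
  .of_bound ((measurable_winProb2 B v i j x).comp hg).aestronglyMeasurable 1
    (ae_of_all _ fun a => abs_winProb2_le_one B v i j x (g a))

end WinProb

theorem measurable_payoff2 (B : Fin 2 → ℝ) (v : Fin 2 → Fin 2 → ℝ) (i : Fin 2) (p : ℝ × ℝ) :
    Measurable (payoff2 B v i p) :=
  ((((measurable_winProb2 B v i 0 p.1).comp measurable_fst).mul_const _).sub
    measurable_const).add
    ((((measurable_winProb2 B v i 1 p.2).comp measurable_snd).mul_const _).sub measurable_const)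

theorem setIntegral_Icc_zero_one_comp_mul_of_step {W : ℝ → ℝ} {x c : ℝ} (hc : 0 < c)
    (hx : 0 ≤ x) (h1 : ∀ u < x, W u = 1) (h0 : ∀ u, x < u → W u = 0) :
    ∫ t in Icc (0 : ℝ) 1, W (t * c) = min (x / c) 1 := by
  have hW : (fun t => W (t * c)) =ᵐ[volume.restrict (Ico 0 1)] (Iio (x / c)).indicator 1 := by
    refine ae_restrict_of_ae
      ((measure_eq_zero_iff_ae_notMem.1 (measure_singleton (x / c))).mono fun t ht => ?_)
    rcases Ne.lt_or_gt ht with h | h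
    · dsimp only
      rw [h1 _ ((lt_div_iff₀ hc).1 h), indicator_of_mem (mem_Iio.2 h), Pi.one_apply]
    · dsimp only
      rw [h0 _ ((div_lt_iff₀ hc).1 h), indicator_of_notMem (notMem_Iio.2 h.le)]
  rw [integral_Icc_eq_integral_Ico, integral_congr_ae hW, integral_indicator_one measurableSet_Iio,
    measureReal_restrict_apply measurableSet_Iio, inter_comm, Ico_inter_Iio,
    Real.volume_real_Ico_of_le (le_min zero_le_one (div_nonneg hx hc.le)), sub_zero, min_comm]

theorem setIntegral_Icc_zero_one_comp_one_sub (f : ℝ → ℝ) :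
    ∫ t in Icc (0 : ℝ) 1, f (1 - t) = ∫ t in Icc (0 : ℝ) 1, f t := by
  simp only [integral_Icc_eq_integral_Ioc, ← intervalIntegral.integral_of_le zero_le_one,
    intervalIntegral.integral_comp_sub_left, sub_self, sub_zero]

instance isProbabilityMeasure_volume_restrict_Icc_zero_one :
    IsProbabilityMeasure (volume.restrict (Icc (0 : ℝ) 1)) :=
  ⟨by simp⟩

theorem measurable_unifSeg_parametrization (a b : ℝ × ℝ) :
    Measurable fun t : ℝ => ((1 - t) * a.1 + t * b.1, (1 - t) * a.2 + t * b.2) := by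
  fun_prop

instance isProbabilityMeasure_unifSeg (a b : ℝ × ℝ) : IsProbabilityMeasure (unifSeg a b) :=
  Measure.isProbabilityMeasure_map (measurable_unifSeg_parametrization a b).aemeasurable

theorem unifSeg_self (a : ℝ × ℝ) : unifSeg a a = Measure.dirac a := by
  simp [unifSeg, ← add_mul, Measure.map_const]

theorem ae_unifSeg_mem_segment (a b : ℝ × ℝ) : ∀ᵐ p ∂unifSeg a b, p ∈ segment ℝ a b := by
  have hseg : segment ℝ a b = (fun t : ℝ => ((1 - t) * a.1 + t * b.1, (1 - t) * a.2 + t * b.2))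
      '' Icc 0 1 := by
    rw [segment_eq_image]
    congr! 2 with t
  rw [unifSeg, ae_map_iff (measurable_unifSeg_parametrization a b).aemeasurable
    (hseg ▸ (isCompact_Icc.image (by fun_prop)).measurableSet)]
  exact (ae_restrict_mem measurableSet_Icc).mono fun t ht => hseg ▸ mem_image_of_mem _ ht

theorem measurableSet_feas (Bi : ℝ) : MeasurableSet (Feas Bi) :=
  (isClosed_le continuous_const continuous_fst).measurableSet.inter
    ((isClosed_le continuous_const continuous_snd).measurableSet.inter
      (isClosed_le (continuous_fst.add continuous_snd) continuous_const).measurableSet)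

theorem convex_feas (Bi : ℝ) : Convex ℝ (Feas Bi) := by
  rintro p ⟨hp1, hp2, hp⟩ q ⟨hq1, hq2, hq⟩ a b ha hb hab
  refine ⟨by simp only [Prod.fst_add, Prod.smul_fst, smul_eq_mul]; positivity,
    by simp only [Prod.snd_add, Prod.smul_snd, smul_eq_mul]; positivity, ?_⟩
  simp only [Prod.fst_add, Prod.snd_add, Prod.smul_fst, Prod.smul_snd, smul_eq_mul]
  nlinarith

theorem isStrategy2_iff_ae {Bi : ℝ} {μ : Measure (ℝ × ℝ)} :
    IsStrategy2 Bi μ ↔ IsProbabilityMeasure μ ∧ ∀ᵐ p ∂μ, p ∈ Feas Bi := by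
  refine and_congr_right fun _ => ?_
  rw [ae_iff_measure_eq (p := (· ∈ Feas Bi)) (measurableSet_feas Bi).nullMeasurableSet,
    measure_univ, ofPred_mem_eq]

theorem isStrategy2_unifSeg {Bi : ℝ} {a b : ℝ × ℝ} (ha : a ∈ Feas Bi) (hb : b ∈ Feas Bi) :
    IsStrategy2 Bi (unifSeg a b) :=
  isStrategy2_iff_ae.2 ⟨inferInstance,
    (ae_unifSeg_mem_segment a b).mono fun _ hp => (convex_feas Bi).segment_subset ha hb hp⟩

section Payoff

variable {B : Fin 2 → ℝ} {v : Fin 2 → Fin 2 → ℝ} {i : Fin 2}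

theorem setIntegral_winProb2_comp_mul {j : Fin 2} {x c : ℝ} (hc : 0 < c) (hx : 0 ≤ x) :
    ∫ t in Icc (0 : ℝ) 1, winProb2 B v i j x (t * c) = min (x / c) 1 :=
  setIntegral_Icc_zero_one_comp_mul_of_step hc hx (fun _ => winProb2_of_lt)
    (fun _ => winProb2_of_gt)

theorem integral_payoff2_unifSeg_antidiag {c : ℝ} (hc : 0 < c) {p : ℝ × ℝ} (hp1 : 0 ≤ p.1)
    (hp2 : 0 ≤ p.2) :
    ∫ q, payoff2 B v i p q ∂unifSeg (0, c) (c, 0) =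
      (min (p.1 / c) 1 * v i 0 - p.1) + (min (p.2 / c) 1 * v i 1 - p.2) := by
  have hwin1 : ∫ t in Icc (0 : ℝ) 1, winProb2 B v i 1 p.2 ((1 - t) * c) = min (p.2 / c) 1 :=
    (setIntegral_Icc_zero_one_comp_one_sub fun s => winProb2 B v i 1 p.2 (s * c)).trans
      (setIntegral_winProb2_comp_mul hc hp2)
  have hint0 : Integrable (fun t => winProb2 B v i 0 p.1 (t * c)) (volume.restrict (Icc 0 1)) :=
    integrable_winProb2_comp (by fun_prop) _
  have hint1 : Integrable (fun t => winProb2 B v i 1 p.2 ((1 - t) * c))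
      (volume.restrict (Icc 0 1)) :=
    integrable_winProb2_comp (by fun_prop) _
  rw [unifSeg, integral_map (measurable_unifSeg_parametrization _ _).aemeasurable
    (measurable_payoff2 B v i p).aestronglyMeasurable]
  simp only [payoff2, mul_zero, add_zero, zero_add]
  rw [integral_add (by exact (hint0.mul_const _).sub (integrable_const _))
      (by exact (hint1.mul_const _).sub (integrable_const _)),
    integral_sub (hint0.mul_const _) (integrable_const _),
    integral_sub (hint1.mul_const _) (integrable_const _), integral_mul_const, integral_mul_const,
    setIntegral_winProb2_comp_mul hc hp1, hwin1]
  simp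

end Payoff

section Antidiagonal

variable {B : Fin 2 → ℝ} {v : Fin 2 → Fin 2 → ℝ} {i : Fin 2} {vv : ℝ}

theorem integral_payoff2_unifSeg_antidiag_le {Bo : ℝ} (hc : 0 < min vv Bo)
    (hv0 : v i 0 = vv) (hv1 : v i 1 = vv) {p : ℝ × ℝ} (hp : p ∈ Feas Bo) :
    ∫ q, payoff2 B v i p q ∂unifSeg (0, min vv Bo) (min vv Bo, 0) ≤ vv - min vv Bo := by
  obtain ⟨hx, hy, hxy⟩ := hp
  set c := min vv Bo
  have hvv : 0 < vv := hc.trans_le (min_le_left _ _)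
  have hitem : ∀ z, 0 ≤ z → min (z / c) 1 * vv - z ≤ z * (vv / c - 1) := fun z hz => by
    have := mul_le_mul_of_nonneg_right (min_le_left (z / c) 1) hvv.le
    rw [div_mul_eq_mul_div] at this
    rw [mul_sub, mul_div_assoc', mul_one]
    linarith
  have hsum : (p.1 + p.2) * (vv / c - 1) ≤ vv - c := by
    rcases le_total vv Bo with h | h
    · simp [c, min_eq_left h, hvv.ne']
    · have hslope : 0 ≤ vv / c - 1 := by
        rw [sub_nonneg, one_le_div hc]; exact min_le_left _ _
      calc (p.1 + p.2) * (vv / c - 1) ≤ c * (vv / c - 1) := by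
            gcongr; rwa [show c = Bo from min_eq_right h]
        _ = vv - c := by field_simp
  rw [integral_payoff2_unifSeg_antidiag hc hx hy, hv0, hv1]
  linarith [hitem _ hx, hitem _ hy]

theorem integral_payoff2_unifSeg_antidiag_of_mem_segment {c : ℝ} (hc : 0 < c)
    (hv0 : v i 0 = vv) (hv1 : v i 1 = vv) {p : ℝ × ℝ} (hp : p ∈ segment ℝ (0, c) (c, 0)) :
    ∫ q, payoff2 B v i p q ∂unifSeg (0, c) (c, 0) = vv - c := by
  obtain ⟨a, b, ha, hb, hab, rfl⟩ := hp
  have hcoords : a • ((0 : ℝ), c) + b • (c, (0 : ℝ)) = (b * c, a * c) := by simp [mul_comm]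
  rw [hcoords, integral_payoff2_unifSeg_antidiag hc (by positivity) (by positivity), hv0, hv1,
    mul_div_cancel_right₀ _ hc.ne', mul_div_cancel_right₀ _ hc.ne',
    min_eq_left (by linarith), min_eq_left (by linarith)]
  linear_combination (vv - c) * hab

end Antidiagonal

theorem integral_payoff2_unifSeg_zero {B : Fin 2 → ℝ} {v : Fin 2 → Fin 2 → ℝ} {i : Fin 2}
    (hsymm : ∀ j, min (B (1 - i)) (v (1 - i) j) = min (B i) (v i j)) :
    ∫ q, payoff2 B v i 0 q ∂unifSeg 0 0 = (v i 0 + v i 1) / 2 := by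
  rw [unifSeg_self, integral_dirac, payoff2, winProb2_self (hsymm 0), winProb2_self (hsymm 1)]
  simp only [Prod.fst_zero, Prod.snd_zero]
  ring

theorem integral_le_of_ae_le_of_nonneg {α : Type*} [MeasurableSpace α] {μ : Measure α}
    [IsProbabilityMeasure μ] {f : α → ℝ} {K : ℝ} (hK : 0 ≤ K) (hf : ∀ᵐ a ∂μ, f a ≤ K) :
    ∫ a, f a ∂μ ≤ K := by
  -- `0 ≤ K` covers the junk value `0` of the integral of a non-integrable function.
  by_cases hint : Integrable f μ
  · simpa using integral_mono_ae hint (integrable_const K) hf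
  · rwa [integral_undef hint]

theorem isNash2_of_forall_le_of_ae_eq {B : Fin 2 → ℝ} {v : Fin 2 → Fin 2 → ℝ}
    {F : Fin 2 → Measure (ℝ × ℝ)} {K : Fin 2 → ℝ} (hF : ∀ i, IsStrategy2 (B i) (F i))
    (hK : ∀ i, 0 ≤ K i) (hle : ∀ i, ∀ p ∈ Feas (B i), ∫ q, payoff2 B v i p q ∂F (1 - i) ≤ K i)
    (heq : ∀ i, ∀ᵐ p ∂F i, ∫ q, payoff2 B v i p q ∂F (1 - i) = K i) :
    IsNash2 B v F := by
  refine ⟨hF, fun i μ hμ => ?_⟩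
  obtain ⟨hμprob, hμfeas⟩ := isStrategy2_iff_ae.1 hμ
  have := (hF i).1
  calc expUtil2 B v i μ (F (1 - i)) ≤ K i :=
        integral_le_of_ae_le_of_nonneg (hK i) (hμfeas.mono (hle i))
    _ = expUtil2 B v i (F i) (F (1 - i)) := by simp [expUtil2, integral_congr_ae (heq i)]

/-- Fully symmetric two-item auction: if `B₁ = B₂` and all four valuations equal
`vv`, then both players playing the uniform distribution on the anti-diagonal
segment `{(t, c - t) : t ∈ [0, c]}`, where `c = min {vv, B₁}`, is a Nash
equilibrium. -/
theorem nash_two_items_symmetric (B : Fin 2 → ℝ) (v : Fin 2 → Fin 2 → ℝ)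
    (hB : ∀ i, 0 ≤ B i) (hv : ∀ i j, 0 < v i j)
    (hBeq : B 0 = B 1) (vv : ℝ) (hvv : ∀ i j, v i j = vv) :
    IsNash2 B v (fun _ =>
      unifSeg (0, min vv (B 0)) (min vv (B 0), 0)) := by
  have hvv0 : 0 < vv := hvv 0 0 ▸ hv 0 0
  have hBi : ∀ i, B i = B 0 := by
    intro i; fin_cases i <;> simp [hBeq]
  set c := min vv (B 0)
  have hc0 : 0 ≤ c := le_min hvv0.le (hB 0)
  have hF : ∀ i, IsStrategy2 (B i) (unifSeg (0, c) (c, 0)) := fun i =>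
    hBi i ▸ isStrategy2_unifSeg ⟨le_rfl, hc0, by simp [c]⟩ ⟨hc0, le_rfl, by simp [c]⟩
  have hK : ∀ _ : Fin 2, 0 ≤ vv - c := fun _ => sub_nonneg.2 (min_le_left _ _)
  rcases hc0.eq_or_lt with hc | hc
  · have hB0 : B 0 = 0 := by
      rcases min_choice vv (B 0) with h | h <;> linarith
    have hval : ∀ i, ∀ p ∈ Feas (B i), ∫ q, payoff2 B v i p q ∂unifSeg (0, c) (c, 0) = vv - c := by
      rintro i p ⟨hp1, hp2, hp⟩
      obtain rfl : p = 0 :=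
        Prod.ext (show p.1 = 0 by linarith [hBi i]) (show p.2 = 0 by linarith [hBi i])
      rw [← hc, Prod.mk_zero_zero, integral_payoff2_unifSeg_zero fun j => by
        rw [hBi (1 - i), hBi i, hvv, hvv], hvv, hvv]
      ring
    exact isNash2_of_forall_le_of_ae_eq hF hK (fun i p hp => (hval i p hp).le)
      fun i => (isStrategy2_iff_ae.1 (hF i)).2.mono (hval i)
  · exact isNash2_of_forall_le_of_ae_eq hF hK
      (fun i p hp => integral_payoff2_unifSeg_antidiag_le hc (hvv i 0) (hvv i 1) (hBi i ▸ hp))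
      fun i => (ae_unifSeg_mem_segment _ _).mono fun p hp =>
        integral_payoff2_unifSeg_antidiag_of_mem_segment hc (hvv i 0) (hvv i 1) hp
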